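/- For all integers m ≥ 1 and k ≥ 0 let u_{m,k} = (-1)^k(C(m+k,m)+C(m+k-1,m)); then for all n ≥ 1, ∑_{k=0}^{n} u_{m,k} · C(m+2k + 2(n-k), n-k) = ∑_{k=0}^{n} u_{m,k} · C(m+2n, n-k) = 0, and for n = 0 the sum equals 1. -/
import Mathlib


/-- Binomial coefficient `C a b` for integers, with the convention that
`C a b = 0` whenever `b < 0` or `b > a`. -/
def intChoose (a b : ℤ) : ℤ :=
  if 0 ≤ b ∧ b ≤ a then (a.toNat.choose b.toNat : ℤ) else 0

/-- The coefficients `u_{m,k} = (-1)^k (C(m+k,m) + C(m+k-1,m))`. -/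
def uCoeff (m k : ℕ) : ℤ :=
  (-1 : ℤ) ^ k * (intChoose ((m : ℤ) + k) m + intChoose ((m : ℤ) + k - 1) m)

lemma intChoose_natCast (a b : ℕ) : intChoose (a:ℤ) (b:ℤ) = (a.choose b : ℤ) := by
  unfold intChoose
  split
  · simp
  · next h =>
    have : a < b := by omega
    rw [Nat.choose_eq_zero_of_lt this]; simp

/-- The alternating Vandermonde-type identity
`∑_{k=0}^n (-1)^k C(m+k,k) C(M+m+1, n-k) = C(M,n)`. -/
lemma keyF : ∀ (m n M : ℕ), ∑ k ∈ Finset.range (n+1),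
    (-1:ℤ)^k * ((m+k).choose k : ℤ) * ((M+m+1).choose (n-k) : ℤ) = (M.choose n : ℤ) := by
  intro m
  induction m with
  | zero =>
    intro n
    induction n with
    | zero => intro M; simp
    | succ n ih =>
      intro M
      rw [Finset.sum_range_succ']
      have h1 : ∀ k ∈ Finset.range (n+1), (-1:ℤ)^(k+1) * ((0+(k+1)).choose (k+1) : ℤ) * ((M+0+1).choose (n+1-(k+1)) : ℤ)
          = -((-1:ℤ)^k * ((0+k).choose k : ℤ) * ((M+0+1).choose (n-k) : ℤ)) := by
        intro k _
        simp [Nat.succ_sub_succ, pow_succ]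
      rw [Finset.sum_congr rfl h1, Finset.sum_neg_distrib, ih M]
      have hfin : ((M+1).choose (n+1) : ℤ) = (M.choose n : ℤ) + (M.choose (n+1) : ℤ) := by
        rw [Nat.choose_succ_succ]; push_cast; ring
      simp only [zero_add, Nat.add_zero, pow_zero, one_mul, Nat.sub_zero, Nat.choose_self,
        Nat.choose_zero_right, Nat.cast_one]
      omega
  | succ m ihm =>
    intro n
    induction n with
    | zero => intro M; simp
    | succ n ihn =>
      intro M
      rw [Finset.sum_range_succ']
      have h1 : ∀ k ∈ Finset.range (n+1), (-1:ℤ)^(k+1) * (((m+1)+(k+1)).choose (k+1) : ℤ) * ((M+(m+1)+1).choose (n+1-(k+1)) : ℤ)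
          = (-1:ℤ)^(k+1) * ((m+(k+1)).choose (k+1) : ℤ) * (((M+1)+m+1).choose ((n+1)-(k+1)) : ℤ)
            + (-((-1:ℤ)^k * (((m+1)+k).choose k : ℤ) * ((M+(m+1)+1).choose (n-k) : ℤ))) := by
        intro k _
        have hp : ((m+1)+(k+1)).choose (k+1) = (m+k+1).choose k + (m+k+1).choose (k+1) := by
          rw [show (m+1)+(k+1) = (m+k+1)+1 by ring, Nat.choose_succ_succ]
        rw [hp]
        have e1 : (m+(k+1)) = m+k+1 := by ring
        have e2 : ((m+1)+k) = m+k+1 := by ring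
        have e3 : (M+(m+1)+1) = (M+1)+m+1 := by ring
        rw [e1, e2, e3]
        have e4 : (n+1)-(k+1) = n - k := by omega
        rw [e4]
        push_cast
        ring
      rw [Finset.sum_congr rfl h1, Finset.sum_add_distrib, Finset.sum_neg_distrib, ihn M]
      have h2 := ihm (n+1) (M+1)
      rw [Finset.sum_range_succ'] at h2
      simp only [pow_zero, Nat.choose_zero_right, Nat.cast_one, one_mul, Nat.sub_zero,
        Nat.add_zero, Nat.choose_zero_right] at h2 ⊢
      have e3 : (M+(m+1)+1) = (M+1)+m+1 := by ring
      rw [e3]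
      have hfin : ((M+1).choose (n+1) : ℤ) = (M.choose n : ℤ) + (M.choose (n+1) : ℤ) := by
        rw [Nat.choose_succ_succ]; push_cast; ring
      linarith [h2]

/-- The convolution identity: for all `n ≥ 1`,
`∑_{k=0}^{n} u_{m,k} · C(m+2n, n-k) = 0`, and for `n = 0` the sum equals `1`. -/
theorem stmt16 (m : ℕ) (hm : 1 ≤ m) :
    (∀ n : ℕ, 1 ≤ n →
      ∑ k ∈ Finset.range (n + 1),
        uCoeff m k * intChoose ((m : ℤ) + 2 * n) ((n : ℤ) - k) = 0) ∧
    ∑ k ∈ Finset.range (0 + 1),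
        uCoeff m k * intChoose ((m : ℤ) + 2 * 0) ((0 : ℤ) - k) = 1 := by
  constructor
  · intro n hn
    obtain ⟨n, rfl⟩ : ∃ n', n = n' + 1 := ⟨n - 1, by omega⟩
    have hsym : ∀ a b : ℕ, (a+b).choose a = (a+b).choose b := by
      intro a b
      have := Nat.choose_symm (Nat.le_add_left b a)
      rwa [Nat.add_sub_cancel] at this
    have hterm : ∀ k ∈ Finset.range (n + 1 + 1),
        uCoeff m k * intChoose ((m : ℤ) + 2 * (n+1:ℕ)) (((n+1:ℕ) : ℤ) - k) =
        (-1:ℤ)^k * ((m+k).choose k : ℤ) * ((m+2*(n+1)).choose (n+1-k) : ℤ)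
        + (-1:ℤ)^k * ((m+k-1).choose m : ℤ) * ((m+2*(n+1)).choose (n+1-k) : ℤ) := by
      intro k hk
      rw [Finset.mem_range] at hk
      unfold uCoeff
      rw [show (m:ℤ) + (k:ℕ) = ((m+k:ℕ):ℤ) by push_cast; ring,
          show ((m+k:ℕ):ℤ) - 1 = ((m+k-1:ℕ):ℤ) by omega,
          show (m:ℤ) + 2 * ((n+1:ℕ):ℤ) = ((m+2*(n+1):ℕ):ℤ) by push_cast; ring,
          show ((n+1:ℕ):ℤ) - (k:ℤ) = ((n+1-k:ℕ):ℤ) by omega,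
          intChoose_natCast, intChoose_natCast, intChoose_natCast,
          hsym m k]
      ring
    rw [Finset.sum_congr rfl hterm, Finset.sum_add_distrib]
    have hA := keyF m (n+1) (2*(n+1)-1)
    rw [show 2*(n+1)-1+m+1 = m+2*(n+1) by omega] at hA
    rw [hA]
    rw [Finset.sum_range_succ']
    have h2 : ∀ j ∈ Finset.range (n+1),
        (-1:ℤ)^(j+1) * ((m+(j+1)-1).choose m : ℤ) * ((m+2*(n+1)).choose (n+1-(j+1)) : ℤ)
        = -((-1:ℤ)^j * ((m+j).choose j : ℤ) * ((m+2*(n+1)).choose (n-j) : ℤ)) := by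
      intro j _
      rw [show m+(j+1)-1 = m+j by omega, hsym m j, show n+1-(j+1) = n-j by omega, pow_succ]
      ring
    rw [Finset.sum_congr rfl h2, Finset.sum_neg_distrib]
    have hB := keyF m n (2*(n+1)-1)
    rw [show 2*(n+1)-1+m+1 = m+2*(n+1) by omega] at hB
    rw [hB]
    rw [show m+0-1 = m-1 by omega, Nat.choose_eq_zero_of_lt (by omega : m-1 < m)]
    have hsymm : (2*(n+1)-1).choose (n+1) = (2*(n+1)-1).choose n := by
      have := Nat.choose_symm (by omega : n+1 ≤ 2*(n+1)-1)
      rw [show 2*(n+1)-1-(n+1) = n by omega] at this; exact this.symm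
    rw [hsymm]
    push_cast
    ring
  · norm_num [Finset.sum_range_one, uCoeff]
    rw [show (m:ℤ) - 1 = ((m-1:ℕ):ℤ) by omega,
        show (0:ℤ) = ((0:ℕ):ℤ) by norm_num,
        intChoose_natCast, intChoose_natCast, intChoose_natCast,
        Nat.choose_self, Nat.choose_eq_zero_of_lt (by omega : m - 1 < m), Nat.choose_zero_right]
    norm_num
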